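/- arXiv:1312.7154 — 7 statements merged into one kernel-verified Lean document; each statement's English description precedes it below -/
import Mathlib

section
/- Let I be an interval of ℝ with nonempty interior, let G be a G_δ-subset of ℝ, and let (f_n)_{n≥0} be a sequence of continuous, nowhere locally constant real-valued functions on I. Then the intersection ⋂_{n≥0} f_n⁻¹(G) is a G_δ-subset of I (with its subspace topology). -/
/-!
Pulling back the dense open sets whose intersection is `G` along the countably many maps `f n`
gives countably many open subsets of `I`; they are dense because every nonempty open subset of
the nondegenerate interval `I` contains an open interval, on which `f n` takes two distinct
values, so by the intermediate value theorem its image contains a nondegenerate interval and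
hence meets any dense set.
-/

/-- A `G_δ`-subset of a topological space: a countable intersection of dense
open subsets. -/
def IsGdeltaDense {X : Type*} [TopologicalSpace X] (s : Set X) : Prop :=
  ∃ T : Set (Set X), T.Countable ∧ (∀ t ∈ T, IsOpen t ∧ Dense t) ∧ s = ⋂₀ T

/-- `f` is nowhere locally constant on `I`: on every nonempty open interval
contained in `I`, the restriction of `f` is not constant. -/
def NowhereLocallyConstantOn (f : ℝ → ℝ) (I : Set ℝ) : Prop :=
  ∀ a b : ℝ, a < b → Set.Ioo a b ⊆ I →
    ∃ x ∈ Set.Ioo a b, ∃ y ∈ Set.Ioo a b, f x ≠ f y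

open Set

section IsGdeltaDense

variable {X Y : Type*} [TopologicalSpace X] [TopologicalSpace Y]

theorem IsGdeltaDense.iInter {ι : Type*} [Countable ι] {s : ι → Set X}
    (hs : ∀ i, IsGdeltaDense (s i)) : IsGdeltaDense (⋂ i, s i) := by
  choose T hTc hTod hsT using hs
  refine ⟨⋃ i, T i, countable_iUnion hTc, fun t ht => ?_,
    by rw [sInter_iUnion, iInter_congr hsT]⟩
  obtain ⟨i, ht⟩ := mem_iUnion.mp ht
  exact hTod i t ht

theorem IsGdeltaDense.preimage {φ : X → Y} (hφ : Continuous φ)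
    (hdense : ∀ t : Set Y, IsOpen t → Dense t → Dense (φ ⁻¹' t)) {G : Set Y}
    (hG : IsGdeltaDense G) : IsGdeltaDense (φ ⁻¹' G) := by
  obtain ⟨T, hTc, hTod, rfl⟩ := hG
  refine ⟨(φ ⁻¹' ·) '' T, hTc.image _, ?_, by rw [preimage_sInter, sInter_image]⟩
  rintro _ ⟨t, ht, rfl⟩
  exact ⟨(hTod t ht).1.preimage hφ, hdense t (hTod t ht).1 (hTod t ht).2⟩

end IsGdeltaDense

theorem IsPreconnected.exists_mem_apply_mem_of_dense {S : Set ℝ} (hS : IsPreconnected S)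
    {g : ℝ → ℝ} (hg : ContinuousOn g S) {x y : ℝ} (hx : x ∈ S) (hy : y ∈ S)
    (hxy : g x ≠ g y) {t : Set ℝ} (ht : Dense t) : ∃ z ∈ S, g z ∈ t := by
  have himage : uIcc (g x) (g y) ⊆ g '' S :=
    (hS.image g hg).ordConnected.uIcc_subset (mem_image_of_mem g hx) (mem_image_of_mem g hy)
  obtain ⟨v, hv, hvt⟩ :=
    ht.inter_open_nonempty _ isOpen_Ioo (nonempty_Ioo.mpr (min_lt_max.mpr hxy))
  obtain ⟨z, hz, rfl⟩ := himage (Ioo_subset_Icc_self hv)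
  exact ⟨z, hz, hvt⟩

theorem Set.OrdConnected.exists_Ioo_subset_inter {I V : Set ℝ} (hI : I.OrdConnected)
    (hint : (interior I).Nonempty) (hV : IsOpen V) (hIV : (I ∩ V).Nonempty) :
    ∃ a b, a < b ∧ Ioo a b ⊆ I ∩ V := by
  obtain ⟨x, hxI, hxV⟩ := hIV
  have hx : x ∈ closure (interior I) := by
    rw [(hI.convex (𝕜 := ℝ)).closure_interior_eq_closure_of_nonempty_interior hint]
    exact subset_closure hxI
  obtain ⟨a, b, hab, hsub⟩ := (hV.inter isOpen_interior).exists_Ioo_subset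
    (mem_closure_iff.mp hx V hV hxV)
  exact ⟨a, b, hab, fun z hz => ⟨interior_subset (hsub hz).2, (hsub hz).1⟩⟩

theorem NowhereLocallyConstantOn.dense_domRestrict_preimage {I : Set ℝ} (hI : I.OrdConnected)
    (hint : (interior I).Nonempty) {g : ℝ → ℝ} (hg : ContinuousOn g I)
    (hnlc : NowhereLocallyConstantOn g I) {t : Set ℝ} (ht : Dense t) :
    Dense (I.domRestrict g ⁻¹' t) := by
  refine dense_iff_inter_open.mpr fun U hU ⟨x, hxU⟩ => ?_
  obtain ⟨V, hV, rfl⟩ := isOpen_induced_iff.mp hU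
  obtain ⟨a, b, hab, hsub⟩ := hI.exists_Ioo_subset_inter hint hV ⟨x, x.2, hxU⟩
  obtain ⟨x₁, hx₁, x₂, hx₂, hne⟩ := hnlc a b hab fun y hy => (hsub hy).1
  obtain ⟨z, hz, hzt⟩ := isPreconnected_Ioo.exists_mem_apply_mem_of_dense
    (hg.mono fun y hy => (hsub hy).1) hx₁ hx₂ hne ht
  exact ⟨⟨z, (hsub hz).1⟩, (hsub hz).2, hzt⟩

/-- Alniaçik–Saias: if `I` is an interval with nonempty interior, `G` a
`G_δ`-subset of `ℝ`, and `(f n)` a sequence of continuous nowhere locally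
constant maps on `I`, then `⋂ n, f n ⁻¹' G` is a `G_δ`-subset of `I`. -/
theorem alniacik_saias (I : Set ℝ) (hI : I.OrdConnected)
    (hint : (interior I).Nonempty)
    (G : Set ℝ) (hG : IsGdeltaDense G)
    (f : ℕ → ℝ → ℝ) (hcont : ∀ n, ContinuousOn (f n) I)
    (hnlc : ∀ n, NowhereLocallyConstantOn (f n) I) :
    IsGdeltaDense {x : I | ∀ n, f n x ∈ G} := by
  rw [ofPred_forall]
  exact IsGdeltaDense.iInter fun n => hG.preimage (hcont n).domRestrict
    fun t _ ht => (hnlc n).dense_domRestrict_preimage hI hint (hcont n) ht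
end

section
/- Let I_1, …, I_n be nonempty open subsets of ℝ and, for each i = 1, …, n, let G_i be a G_δ-subset of I_i. Then there exists a tuple (ξ_1, …, ξ_n) ∈ G_1 × ⋯ × G_n such that the real numbers ξ_1, …, ξ_n are algebraically independent over ℚ. -/
open Set Filter Topology MvPolynomial

theorem IsGdeltaDense.mem_residual {X : Type*} [TopologicalSpace X] {s : Set X}
    (hs : IsGdeltaDense s) : s ∈ residual X := by
  obtain ⟨T, hTc, hT, rfl⟩ := hs
  exact (countable_sInter_mem hTc).2 fun t ht => residual_of_dense_open (hT t ht).1 (hT t ht).2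

instance MvPolynomial.countable {σ R : Type*} [CommSemiring R] [Countable σ] [Countable R] :
    Countable (MvPolynomial σ R) :=
  AddMonoidAlgebra.coeff_injective.countable

section Residual

variable {R σ : Type*} [CommRing R] [IsDomain R] [TopologicalSpace R] [T1Space R]
  [∀ x : R, NeBot (𝓝[≠] x)]

theorem MvPolynomial.dense_setOf_eval_ne_zero {p : MvPolynomial σ R} (hp : p ≠ 0) :
    Dense {x : σ → R | eval x p ≠ 0} := by
  rw [← compl_ofPred, ← interior_eq_empty_iff_dense_compl]
  refine eq_empty_of_forall_notMem fun x₀ hx₀ => hp ?_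
  rw [mem_interior_iff_mem_nhds, nhds_pi, Filter.mem_pi] at hx₀
  obtain ⟨_, -, t, ht, hsub⟩ := hx₀
  refine funext_set t (fun i => infinite_of_mem_nhds _ (ht i)) fun x hx => ?_
  simpa using hsub fun i _ => hx i (mem_univ i)

theorem eventually_residual_algebraicIndependent (K : Type*) [Field K] [Countable K]
    [Algebra K R] [IsTopologicalRing R] [Countable σ] :
    ∀ᶠ x in residual (σ → R), AlgebraicIndependent K x := by
  have hne (p : MvPolynomial σ K) (hp : p ≠ 0) :
      ∀ᶠ x in residual (σ → R), eval x (map (algebraMap K R) p) ≠ 0 :=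
    residual_of_dense_open (isOpen_compl_singleton.preimage (continuous_eval _))
      (dense_setOf_eval_ne_zero
        ((map_ne_zero_iff _ (map_injective _ (algebraMap K R).injective)).2 hp))
  filter_upwards [eventually_countable_forall.2 fun p : {p : MvPolynomial σ K // p ≠ 0} =>
    hne p p.2] with x hx
  refine algebraicIndependent_iff.2 fun p hp => by_contra fun hp0 => hx ⟨p, hp0⟩ ?_
  rwa [eval_map, ← aeval_def]

end Residual

theorem exists_algebraically_independent_in_gdeltas_general (n : ℕ)
    (I : Fin n → Set ℝ) (hIo : ∀ i, IsOpen (I i)) (hIne : ∀ i, (I i).Nonempty)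
    (G : Fin n → Set ℝ)
    (hG : ∀ i, IsGdeltaDense ((Subtype.val ⁻¹' G i) : Set (I i))) :
    ∃ ξ : Fin n → ℝ, (∀ i, ξ i ∈ G i) ∧ AlgebraicIndependent ℚ ξ := by
  have := fun i => (hIo i).locallyCompactSpace
  have := fun i => (hIne i).to_subtype
  have hval : IsOpenEmbedding (Pi.map fun i (x : I i) => (x : ℝ)) :=
    .piMap fun i => (hIo i).isOpenEmbedding_subtypeVal
  have hmemG : ∀ᶠ x in residual (∀ i, I i), ∀ i, (x i : ℝ) ∈ G i :=
    eventually_all.2 fun i =>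
      (tendsto_residual_of_isOpenMap (continuous_apply i) (isOpenMap_eval i)).eventually
        (p := fun y : I i => (y : ℝ) ∈ G i) (hG i).mem_residual
  have hindep : ∀ᶠ x in residual (∀ i, I i), AlgebraicIndependent ℚ fun i => (x i : ℝ) :=
    (tendsto_residual_of_isOpenMap hval.continuous hval.isOpenMap).eventually
      (eventually_residual_algebraicIndependent ℚ)
  obtain ⟨x, hxG, hx⟩ := (dense_of_mem_residual (hmemG.and hindep)).nonempty
  exact ⟨fun i => x i, hxG, hx⟩

/-- Let `I 1, …, I n` be nonempty open subsets of `ℝ` and, for each `i`, let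
`G i ⊆ I i` be a `G_δ`-subset of `I i` (with its subspace topology). Then
there is a tuple `(ξ 1, …, ξ n) ∈ G 1 × ⋯ × G n` of real numbers that are
algebraically independent over `ℚ`. -/
theorem exists_algebraically_independent_in_gdeltas (n : ℕ)
    (I : Fin n → Set ℝ) (hIo : ∀ i, IsOpen (I i)) (hIne : ∀ i, (I i).Nonempty)
    (G : Fin n → Set ℝ) (hGI : ∀ i, G i ⊆ I i)
    (hG : ∀ i, IsGdeltaDense ((Subtype.val ⁻¹' G i) : Set (I i))) :
    ∃ ξ : Fin n → ℝ, (∀ i, ξ i ∈ G i) ∧ AlgebraicIndependent ℚ ξ :=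
  exists_algebraically_independent_in_gdeltas_general n I hIo hIne G hG
end

section
/- Let I be an interval of ℝ with nonempty interior and let (f_n)_{n≥1} be a sequence of continuous, nowhere locally constant real-valued functions on I. Then there exists an uncountable subset E of I ∩ 𝕃 such that for every ξ ∈ E and every n ≥ 1 the number f_n(ξ) is a Liouville number. -/
open Set Filter Topology

section Residual

variable {X : Type*} [TopologicalSpace X]

theorem ContinuousOn.isGδ_inter_preimage {Y : Type*} [TopologicalSpace Y] {f : X → Y}
    {U : Set X} {t : Set Y} (hf : ContinuousOn f U) (hU : IsOpen U) (ht : IsGδ t) :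
    IsGδ (U ∩ f ⁻¹' t) := by
  obtain ⟨T, hT, rfl⟩ := ht.eq_iInter_nat
  rw [preimage_iInter, inter_iInter]
  exact .iInter_of_isOpen fun n ↦ hf.isOpen_inter_preimage hU (hT n)

theorem eventually_residual_imp_mem_of_isGδ {U s : Set X} (hs : IsGδ s)
    (hUs : U ⊆ closure s) : ∀ᶠ x in residual X, x ∈ U → x ∈ s := by
  have hdense : Dense (s ∪ (closure U)ᶜ) := by
    rw [dense_iff_closure_eq, closure_union, eq_univ_iff_forall]
    intro x
    by_cases hx : x ∈ closure U
    · exact Or.inl (closure_minimal hUs isClosed_closure hx)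
    · exact Or.inr (subset_closure hx)
  filter_upwards [residual_of_dense_Gδ (hs.union isClosed_closure.isOpen_compl.isGδ) hdense]
    with x hx hxU
  exact hx.resolve_right (not_not_intro (subset_closure hxU))

theorem Set.Countable.compl_mem_residual [T1Space X] [∀ x : X, NeBot (𝓝[≠] x)] {s : Set X}
    (hs : s.Countable) : sᶜ ∈ residual X := by
  rw [← biUnion_of_singleton s, compl_iUnion₂]
  exact (countable_bInter_mem hs).2 fun x _ ↦
    residual_of_dense_open isOpen_compl_singleton (dense_compl_singleton x)

theorem not_countable_inter_of_mem_residual [BaireSpace X] [T1Space X]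
    [∀ x : X, NeBot (𝓝[≠] x)] {s U : Set X} (hs : s ∈ residual X) (hU : IsOpen U)
    (hne : U.Nonempty) : ¬ (U ∩ s).Countable := by
  intro hcount
  obtain ⟨x, ⟨hxs, hxc⟩, hxU⟩ :=
    (dense_of_mem_residual (inter_mem hs hcount.compl_mem_residual)).exists_mem_open hU hne
  exact hxc ⟨hxU, hxs⟩

end Residual

namespace NowhereLocallyConstantOn

variable {f : ℝ → ℝ} {I D : Set ℝ}

theorem exists_mem_Ioo_apply_mem (hf : NowhereLocallyConstantOn f I) (hcont : ContinuousOn f I)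
    (hD : Dense D) {c d : ℝ} (hcd : c < d) (hcdI : Ioo c d ⊆ I) :
    ∃ x ∈ Ioo c d, f x ∈ D := by
  obtain ⟨x, hx, y, hy, hxy⟩ := hf c d hcd hcdI
  have hxy_sub : uIcc x y ⊆ Ioo c d := ordConnected_Ioo.uIcc_subset hx hy
  obtain ⟨v, hvD, hv⟩ := hD.exists_between (min_lt_max.2 hxy)
  obtain ⟨w, hw, hfw⟩ :=
    intermediate_value_uIcc (hcont.mono (hxy_sub.trans hcdI)) (Ioo_subset_Icc_self hv)
  exact ⟨w, hxy_sub hw, hfw ▸ hvD⟩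

theorem subset_closure_inter_preimage (hf : NowhereLocallyConstantOn f I)
    (hcont : ContinuousOn f I) (hD : Dense D) {U : Set ℝ} (hU : IsOpen U) (hUI : U ⊆ I) :
    U ⊆ closure (U ∩ f ⁻¹' D) := by
  intro x hx
  rw [mem_closure_iff_nhds]
  intro t ht
  obtain ⟨c, d, hxcd, hcd⟩ :=
    mem_nhds_iff_exists_Ioo_subset.1 (inter_mem ht (hU.mem_nhds hx))
  obtain ⟨y, hy, hfy⟩ :=
    hf.exists_mem_Ioo_apply_mem hcont hD (hxcd.1.trans hxcd.2)
      (hcd.trans (inter_subset_right.trans hUI))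
  exact ⟨y, (hcd hy).1, (hcd hy).2, hfy⟩

theorem eventually_residual_liouville_apply (hf : NowhereLocallyConstantOn f I)
    (hcont : ContinuousOn f I) {U : Set ℝ} (hU : IsOpen U) (hUI : U ⊆ I) :
    ∀ᶠ ξ in residual ℝ, ξ ∈ U → Liouville (f ξ) := by
  filter_upwards [eventually_residual_imp_mem_of_isGδ
    ((hcont.mono hUI).isGδ_inter_preimage hU IsGδ.setOfPred_liouville)
    (hf.subset_closure_inter_preimage hcont dense_liouville hU hUI)] with ξ hξ hξU
  exact (hξ hξU).2

end NowhereLocallyConstantOn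

theorem uncountable_liouville_common_preimage_general (I : Set ℝ)
    (hint : (interior I).Nonempty)
    (f : ℕ → ℝ → ℝ) (hcont : ∀ n, ContinuousOn (f n) I)
    (hnlc : ∀ n, NowhereLocallyConstantOn (f n) I) :
    ∃ E : Set ℝ, E ⊆ I ∧ (∀ ξ ∈ E, Liouville ξ) ∧ ¬ E.Countable ∧
      ∀ ξ ∈ E, ∀ n, Liouville (f n ξ) := by
  have hres : ∀ᶠ ξ in residual ℝ,
      Liouville ξ ∧ ∀ n, ξ ∈ interior I → Liouville (f n ξ) :=
    eventually_residual_liouville.and <| eventually_countable_forall.2 fun n ↦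
      (hnlc n).eventually_residual_liouville_apply (hcont n) isOpen_interior interior_subset
  refine ⟨interior I ∩ {ξ | Liouville ξ ∧ ∀ n, ξ ∈ interior I → Liouville (f n ξ)},
    fun ξ hξ ↦ interior_subset hξ.1, fun ξ hξ ↦ hξ.2.1,
    not_countable_inter_of_mem_residual hres isOpen_interior hint,
    fun ξ hξ n ↦ hξ.2.2 n hξ.1⟩

/-- Let `I` be an interval of `ℝ` with nonempty interior and `(f n)` a sequence
of continuous, nowhere locally constant real maps on `I`. Then there is an
uncountable subset `E` of `I ∩ 𝕃` such that `f n ξ` is a Liouville number for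
all `n` and all `ξ ∈ E`. -/
theorem uncountable_liouville_common_preimage (I : Set ℝ) (hI : I.OrdConnected)
    (hint : (interior I).Nonempty)
    (f : ℕ → ℝ → ℝ) (hcont : ∀ n, ContinuousOn (f n) I)
    (hnlc : ∀ n, NowhereLocallyConstantOn (f n) I) :
    ∃ E : Set ℝ, E ⊆ I ∧ (∀ ξ ∈ E, Liouville ξ) ∧ ¬ E.Countable ∧
      ∀ ξ ∈ E, ∀ n, Liouville (f n ξ) :=
  uncountable_liouville_common_preimage_general I hint f hcont hnlc
end

section
/- Let I be an interval of ℝ with nonempty interior and let φ : I → ℝ be a continuous, nowhere locally constant function. Then the set of Liouville numbers ξ ∈ I such that φ(ξ) is also a Liouville number is uncountable. -/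
open Set Filter Topology

/-!
Both `{ξ | Liouville ξ}` and `{ξ | Liouville (φ ξ)}` are residual in a nonempty open interval
`U ⊆ I`. For the second, pull back each dense open set `V` of the Gδ-decomposition of the
Liouville numbers: since `φ` maps every open subinterval of `U` onto a nondegenerate interval,
`U ∩ φ⁻¹ V` is open and dense in `U`. A set that is residual in a nonempty open subset of the
Baire space `ℝ` cannot be countable, because countable subsets of `ℝ` are meagre.
-/

section Residual

variable {X Y : Type*} [TopologicalSpace X] [TopologicalSpace Y]

theorem Set.Countable.isMeagre [T1Space X] [∀ x : X, (𝓝[≠] x).NeBot] {s : Set X}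
    (hs : s.Countable) : IsMeagre s := by
  rw [← biUnion_of_singleton s]
  exact isMeagre_biUnion hs fun x _ ↦
    residual_of_dense_open isClosed_singleton.isOpen_compl (dense_compl_singleton x)

theorem not_countable_of_mem_residual_inf_principal [BaireSpace X] [T1Space X]
    [∀ x : X, (𝓝[≠] x).NeBot] {U s : Set X} (hU : IsOpen U) (hne : U.Nonempty)
    (hs : s ∈ residual X ⊓ 𝓟 U) : ¬ s.Countable := by
  intro hcount
  have hUs : IsMeagre (U \ s) :=
    mem_of_superset (mem_inf_principal.1 hs) fun x hx hxUs ↦ hxUs.2 (hx hxUs.1)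
  exact not_isMeagre_of_isOpen hU hne <|
    (hUs.union hcount.isMeagre).mono (by rw [sdiff_union_self]; exact subset_union_left)

theorem tendsto_residual_inf_principal {f : X → Y} {U : Set X} (hU : IsOpen U)
    (hf : ContinuousOn f U)
    (himage : ∀ W, IsOpen W → W.Nonempty → W ⊆ U → (interior (f '' W)).Nonempty) :
    Tendsto f (residual X ⊓ 𝓟 U) (residual Y) := by
  refine le_countableGenerate_iff_of_countableInterFilter.mpr ?_
  rintro V ⟨hV, hVd⟩
  have hdense : Dense (U ∩ f ⁻¹' V ∪ (closure U)ᶜ) := by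
    refine dense_iff_inter_open.2 fun O hO hOne ↦ ?_
    rcases (O ∩ U).eq_empty_or_nonempty with hOU | hOU
    · obtain ⟨x, hx⟩ := hOne
      exact ⟨x, hx, Or.inr fun hxU ↦ (mem_closure_iff.1 hxU O hO hx).ne_empty hOU⟩
    · obtain ⟨y, hyW, hyV⟩ :=
        hVd.inter_open_nonempty _ isOpen_interior (himage _ (hO.inter hU) hOU inter_subset_right)
      obtain ⟨x, hx, rfl⟩ := interior_subset hyW
      exact ⟨x, hx.1, Or.inl ⟨hx.2, hyV⟩⟩
  refine mem_map.2 <| mem_inf_of_inter (residual_of_dense_open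
    ((hf.isOpen_inter_preimage hU hV).union isClosed_closure.isOpen_compl) hdense)
    (mem_principal_self U) ?_
  rintro x ⟨hx | hx, hxU⟩
  · exact hx.2
  · exact absurd (subset_closure hxU) hx

end Residual

theorem NowhereLocallyConstantOn.nonempty_interior_image {f : ℝ → ℝ} {I W : Set ℝ}
    (hnlc : NowhereLocallyConstantOn f I) (hf : ContinuousOn f I) (hW : IsOpen W)
    (hne : W.Nonempty) (hWI : W ⊆ I) : (interior (f '' W)).Nonempty := by
  obtain ⟨c, d, hcd, hcdW⟩ := hW.exists_Ioo_subset hne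
  obtain ⟨x, hx, y, hy, hxy⟩ := hnlc c d hcd (hcdW.trans hWI)
  have hxyW : uIcc x y ⊆ W := (ordConnected_Ioo.uIcc_subset hx hy).trans hcdW
  have hsub : uIoo (f x) (f y) ⊆ f '' W :=
    Ioo_subset_Icc_self.trans <|
      (intermediate_value_uIcc (hf.mono (hxyW.trans hWI))).trans (image_mono hxyW)
  exact (nonempty_Ioo.2 (inf_lt_sup.2 hxy)).mono (interior_maximal hsub isOpen_Ioo)

theorem uncountable_liouville_with_liouville_image_general (I : Set ℝ)
    (hint : (interior I).Nonempty)
    (φ : ℝ → ℝ) (hcont : ContinuousOn φ I)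
    (hnlc : NowhereLocallyConstantOn φ I) :
    ¬ {ξ : ℝ | ξ ∈ I ∧ Liouville ξ ∧ Liouville (φ ξ)}.Countable := by
  obtain ⟨a, b, hab, habI⟩ := isOpen_interior.exists_Ioo_subset hint
  have hU : Ioo a b ⊆ I := habI.trans interior_subset
  have hφ : Tendsto φ (residual ℝ ⊓ 𝓟 (Ioo a b)) (residual ℝ) :=
    tendsto_residual_inf_principal isOpen_Ioo (hcont.mono hU) fun _ hW hne hWU ↦
      hnlc.nonempty_interior_image hcont hW hne (hWU.trans hU)
  refine not_countable_of_mem_residual_inf_principal isOpen_Ioo (nonempty_Ioo.2 hab) ?_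
  filter_upwards [mem_inf_of_left eventually_residual_liouville, hφ eventually_residual_liouville,
    mem_inf_of_right (mem_principal_self (Ioo a b))] with ξ hξ hφξ hξU
  exact ⟨hU hξU, hξ, hφξ⟩

/-- Let `I` be an interval of `ℝ` with nonempty interior and `φ : I → ℝ`
continuous and nowhere locally constant. Then the set of Liouville numbers
`ξ ∈ I` such that `φ ξ` is a Liouville number is uncountable. -/
theorem uncountable_liouville_with_liouville_image (I : Set ℝ)
    (hI : I.OrdConnected) (hint : (interior I).Nonempty)
    (φ : ℝ → ℝ) (hcont : ContinuousOn φ I)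
    (hnlc : NowhereLocallyConstantOn φ I) :
    ¬ {ξ : ℝ | ξ ∈ I ∧ Liouville ξ ∧ Liouville (φ ξ)}.Countable :=
  uncountable_liouville_with_liouville_image_general I hint φ hcont hnlc
end

section
/- Let F ∈ ℚ[X,Y] be a nonconstant polynomial with rational coefficients and let t be a real number. Assume that the set of pairs (ξ, η) of Liouville numbers with F(ξ, η) = t is uncountable. Then t is transcendental over ℚ if and only if there exist two Liouville numbers ξ and η that are algebraically independent over ℚ and satisfy F(ξ, η) = t. -/
/-! If `t` is transcendental and all Liouville pairs `(ξ, η)` on the curve `F = t` were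
algebraically dependent, then `η` would be algebraic over `ℚ[ξ]` (as `ξ` is transcendental),
hence so would be `t = F(ξ, η)`, and by the exchange property `ξ` would be algebraic over `ℚ[t]`.
So `ξ` ranges over a countable set and, for each `ξ`, so does `η`: the curve would carry only
countably many Liouville pairs.

Conversely, evaluation at an algebraically independent pair is injective on `ℚ[X, Y]`, so if
`t = F(ξ, η)` were algebraic then `F` would be algebraic over `ℚ`; a nonzero such `F` is
integral over a field inside a domain, hence a unit of `ℚ[X, Y]`, hence constant. -/

open MvPolynomial

theorem MvPolynomial.exists_eq_C_of_isAlgebraic {K σ : Type*} [Field K]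
    {F : MvPolynomial σ K} (hF : IsAlgebraic K F) : ∃ c : K, F = C c := by
  rcases eq_or_ne F 0 with rfl | hF0
  · exact ⟨0, C_0.symm⟩
  obtain ⟨c, -, hc⟩ := isUnit_iff_eq_C_of_isReduced.mp (hF.isIntegral.isUnit hF0)
  exact ⟨c, hc⟩

theorem MvPolynomial.isAlgebraic_aeval {ι K R A : Type*} [CommRing K] [CommRing R] [IsDomain R]
    [CommRing A] [Algebra K R] [Algebra R A] [Algebra K A] [IsScalarTower K R A] {x : ι → A}
    (hx : ∀ i, IsAlgebraic R (x i)) (F : MvPolynomial ι K) : IsAlgebraic R (aeval x F) := by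
  have hle : Algebra.adjoin K (Set.range x) ≤
      (Subalgebra.algebraicClosure R A).restrictScalars K :=
    Algebra.adjoin_le (Set.range_subset_iff.mpr hx)
  exact hle (Algebra.adjoin_range_eq_range_aeval K x ▸ ⟨F, rfl⟩)

section Pair

variable {K A : Type*} [CommRing K] [CommRing A] [Algebra K A]

theorem algebraicIndependent_pair_iff {a b : A} :
    AlgebraicIndependent K ![a, b] ↔
      Transcendental K a ∧ Transcendental (Algebra.adjoin K {a}) b := by
  have : Subsingleton {j : Fin 2 // j ≠ 1} :=
    ⟨fun i j => Subtype.ext (by fin_omega)⟩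
  have himage : ![a, b] '' {1}ᶜ = {a} := by
    ext
    simp [Fin.exists_fin_two, eq_comm]
  rw [AlgebraicIndependent.iff_transcendental_adjoin_image 1,
    algebraicIndependent_singleton_iff ⟨0, by decide⟩, himage]
  rfl

theorem algebraicIndependent_pair_comm {a b : A} :
    AlgebraicIndependent K ![a, b] ↔ AlgebraicIndependent K ![b, a] := by
  rw [← algebraicIndependent_equiv (Equiv.swap 0 1) (f := ![b, a])]
  congr!
  ext i
  fin_cases i <;> rfl

theorem not_algebraicIndependent_pair_iff {a b : A} (ha : Transcendental K a) :
    ¬ AlgebraicIndependent K ![a, b] ↔ IsAlgebraic (Algebra.adjoin K {a}) b := by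
  rw [algebraicIndependent_pair_iff, and_iff_right ha, Transcendental, not_not]

variable [IsDomain A]

theorem not_algebraicIndependent_pair_aeval {a b : A} (ha : Transcendental K a)
    (hab : ¬ AlgebraicIndependent K ![a, b]) (F : MvPolynomial (Fin 2) K) :
    ¬ AlgebraicIndependent K ![a, aeval ![a, b] F] := by
  rw [not_algebraicIndependent_pair_iff ha] at hab ⊢
  refine isAlgebraic_aeval (fun i => ?_) F
  fin_cases i
  · exact isAlgebraic_algebraMap
      (⟨a, Algebra.self_mem_adjoin_singleton K a⟩ : Algebra.adjoin K {a})
  · exact hab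

theorem countable_setOf_not_algebraicIndependent_pair [Countable K] {a : A}
    (ha : Transcendental K a) : {b : A | ¬ AlgebraicIndependent K ![a, b]}.Countable := by
  have : Countable (Polynomial K) :=
    Cardinal.mk_le_aleph0_iff.mp (Polynomial.cardinalMk_le_max.trans (by simp))
  have : Countable (Algebra.adjoin K {a}) := by
    rw [Algebra.adjoin_singleton_eq_range_aeval]
    exact (Polynomial.aeval a).rangeRestrict_surjective.countable
  exact (Algebraic.countable (Algebra.adjoin K {a}) A).mono fun b hb =>
    (not_algebraicIndependent_pair_iff ha).mp hb

theorem countable_setOf_not_algebraicIndependent_pair_of_aeval_eq [Countable K]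
    (F : MvPolynomial (Fin 2) K) {t : A} (ht : Transcendental K t) :
    {p : A × A | Transcendental K p.1 ∧ ¬ AlgebraicIndependent K ![p.1, p.2] ∧
      aeval ![p.1, p.2] F = t}.Countable := by
  let S := {x : A | Transcendental K x ∧ ¬ AlgebraicIndependent K ![t, x]}
  have hS : S.Countable :=
    (countable_setOf_not_algebraicIndependent_pair ht).mono fun x hx => hx.2
  refine (hS.biUnion fun x hx => (Set.countable_singleton x).prod
    (countable_setOf_not_algebraicIndependent_pair hx.1)).mono ?_
  rintro ⟨ξ, η⟩ ⟨hξ, hξη, rfl⟩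
  exact Set.mem_biUnion
    ⟨hξ, algebraicIndependent_pair_comm.not.mp (not_algebraicIndependent_pair_aeval hξ hξη F)⟩
    ⟨rfl, hξη⟩

end Pair

/-- Let `F ∈ ℚ[X,Y]` be nonconstant and `t ∈ ℝ`. If the set of pairs of
Liouville numbers `(ξ, η)` with `F(ξ, η) = t` is uncountable, then `t` is
transcendental over `ℚ` if and only if there are two `ℚ`-algebraically
independent Liouville numbers `ξ, η` with `F(ξ, η) = t`. -/
theorem transcendental_iff_alg_indep_liouville_representation
    (F : MvPolynomial (Fin 2) ℚ) (hF : ∀ c : ℚ, F ≠ C c) (t : ℝ)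
    (huncount : ¬ {p : ℝ × ℝ | Liouville p.1 ∧ Liouville p.2 ∧
        aeval ![p.1, p.2] F = t}.Countable) :
    Transcendental ℚ t ↔
      ∃ ξ η : ℝ, Liouville ξ ∧ Liouville η ∧
        AlgebraicIndependent ℚ ![ξ, η] ∧ aeval ![ξ, η] F = t := by
  constructor
  · intro ht
    by_contra! hdep
    refine huncount ((countable_setOf_not_algebraicIndependent_pair_of_aeval_eq F ht).mono ?_)
    rintro ⟨ξ, η⟩ ⟨hξ, hη, hFt⟩
    exact ⟨mt (IsFractionRing.isAlgebraic_iff ℤ ℚ ℝ).mpr hξ.transcendental,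
      fun hind => hdep ξ η hξ hη hind hFt, hFt⟩
  · rintro ⟨ξ, η, -, -, hind, rfl⟩ halg
    obtain ⟨c, hc⟩ := exists_eq_C_of_isAlgebraic ((isAlgebraic_algHom_iff _ hind).mp halg)
    exact hF c hc
end

section
/- Let g_1, …, g_n be polynomials in ℂ[z]. The following are equivalent: (i) for all 1 ≤ i < j ≤ n, the polynomial g_i − g_j is not constant; (ii) the entire functions e^{g_1}, …, e^{g_n} are linearly independent over ℂ(z), i.e., for all polynomials A_1, …, A_n ∈ ℂ[z], not all zero, the function z ↦ A_1(z)·exp(g_1(z)) + ⋯ + A_n(z)·exp(g_n(z)) is not identically zero on ℂ. -/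
/-!
If the `g i` have pairwise distinct derivatives, a relation `∑ Aᵢ e^{gᵢ} ≡ 0` is impossible
unless all `Aᵢ = 0`. Divide by `e^{g_a}` and differentiate: `(Aᵢ e^{gᵢ - g_a})' = Bᵢ e^{gᵢ - g_a}`
with `Bᵢ = Aᵢ' + Aᵢ (gᵢ - g_a)'`. Then `B_a = A_a'` has smaller degree, while `Bᵢ ≠ 0` whenever
`Aᵢ ≠ 0` and `i ≠ a`, because `(gᵢ - g_a)' ≠ 0` makes `Aᵢ (gᵢ - g_a)'` dominate in degree.
Induction on the number of terms and on `deg A_a` does the rest. Conversely, if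
`gᵢ - gⱼ = c` then `e^{gᵢ} - e^c e^{gⱼ} ≡ 0`.
-/

open Polynomial Complex

section expDeriv

variable {R : Type*} [Semiring R] [NoZeroDivisors R]

/-- The polynomial factor of `(A e^q)' = (expDeriv q A) e^q`. -/
noncomputable def expDeriv (q A : R[X]) : R[X] := derivative A + A * derivative q

lemma expDeriv_ne_zero {q A : R[X]} (hq : derivative q ≠ 0) (hA : A ≠ 0) :
    expDeriv q A ≠ 0 := by
  have hlt : (derivative A).degree < (A * derivative q).degree := by
    rw [degree_mul]
    calc (derivative A).degree < A.degree := degree_derivative_lt hA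
      _ ≤ A.degree + (derivative q).degree :=
        le_add_of_nonneg_right (zero_le_degree_iff.mpr hq)
  intro h
  have hdeg := degree_add_eq_right_of_degree_lt hlt
  rw [← expDeriv, h, degree_zero, eq_comm, degree_eq_bot] at hdeg
  exact mul_ne_zero hA hq hdeg

end expDeriv

section expPolySum

variable {ι : Type*}

noncomputable def expPolySum (s : Finset ι) (A g : ι → ℂ[X]) (z : ℂ) : ℂ :=
  ∑ i ∈ s, (A i).eval z * exp ((g i).eval z)

variable (s : Finset ι) (A g : ι → ℂ[X])

lemma expPolySum_insert [DecidableEq ι] {a : ι} (ha : a ∉ s) (z : ℂ) :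
    expPolySum (insert a s) A g z = (A a).eval z * exp ((g a).eval z) + expPolySum s A g z :=
  Finset.sum_insert ha

lemma expPolySum_sub (p : ℂ[X]) (z : ℂ) :
    expPolySum s A (fun i => g i - p) z = expPolySum s A g z * exp (-p.eval z) := by
  simp only [expPolySum, Finset.sum_mul, sub_eq_add_neg, eval_add, eval_neg, exp_add, mul_assoc]

lemma expPolySum_sub_eq_zero_iff (p : ℂ[X]) :
    expPolySum s A (fun i => g i - p) = 0 ↔ expPolySum s A g = 0 := by
  simp only [funext_iff, Pi.zero_apply, expPolySum_sub, mul_eq_zero, exp_ne_zero, or_false]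

lemma hasDerivAt_expPolySum (z : ℂ) :
    HasDerivAt (expPolySum s A g) (expPolySum s (fun i => expDeriv (g i) (A i)) g z) z := by
  refine HasDerivAt.fun_sum fun i _ => ?_
  refine (((A i).hasDerivAt z).fun_mul ((g i).hasDerivAt z).cexp).congr_deriv ?_
  simp only [expDeriv, eval_add, eval_mul]
  ring

lemma expPolySum_expDeriv_sub_eq_zero (p : ℂ[X]) (h : expPolySum s A g = 0) :
    expPolySum s (fun i => expDeriv (g i - p) (A i)) g = 0 := by
  rw [← expPolySum_sub_eq_zero_iff _ _ _ p] at h ⊢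
  funext z
  rw [← (hasDerivAt_expPolySum s A _ z).deriv, h]
  exact deriv_const z 0

lemma eq_zero_of_eval_mul_exp_eq_zero {P q : ℂ[X]} (h : ∀ z, P.eval z * exp (q.eval z) = 0) :
    P = 0 :=
  Polynomial.funext fun z => by simpa [exp_ne_zero] using h z

theorem eq_zero_of_expPolySum_eq_zero [DecidableEq ι]
    (hg : (s : Set ι).Pairwise fun i j => derivative (g i) ≠ derivative (g j))
    (hA : expPolySum s A g = 0) : ∀ i ∈ s, A i = 0 := by
  induction s using Finset.induction_on generalizing A with
  | empty => simp
  | insert a s ha ih =>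
    rw [Finset.coe_insert, Set.pairwise_insert_of_notMem ha] at hg
    induction hd : (A a).natDegree using Nat.strong_induction_on generalizing A with
    | _ d ihd =>
    set B := fun i => expDeriv (g i - g a) (A i)
    have hB : expPolySum (insert a s) B g = 0 := expPolySum_expDeriv_sub_eq_zero _ _ _ _ hA
    have hBa : B a = derivative (A a) := by simp [B, expDeriv]
    have hB_zero : ∀ i ∈ insert a s, B i = 0 := by
      by_cases hBa_zero : B a = 0
      · have hBs := ih B hg.1 <| funext fun z => by
          simpa [expPolySum_insert, ha, hBa_zero] using congrFun hB z
        exact Finset.forall_mem_insert _ _ _ |>.2 ⟨hBa_zero, hBs⟩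
      · refine ihd _ ?_ B hB rfl
        rw [← hd, hBa]
        exact natDegree_derivative_lt (derivative_ne_zero.mp (hBa ▸ hBa_zero))
    have hAs : ∀ i ∈ s, A i = 0 := fun i hi => by
      by_contra hAi
      refine expDeriv_ne_zero ?_ hAi (hB_zero i (Finset.mem_insert_of_mem hi))
      rw [derivative_sub, sub_ne_zero]
      exact (hg.2 i hi).2
    have hAa : A a = 0 := eq_zero_of_eval_mul_exp_eq_zero (q := g a) fun z => by
      have hs : expPolySum s A g z = 0 := Finset.sum_eq_zero fun i hi => by simp [hAs i hi]
      simpa [expPolySum_insert, ha, hs] using congrFun hA z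
    exact Finset.forall_mem_insert _ _ _ |>.2 ⟨hAa, hAs⟩

lemma expPolySum_single_sub_single [Fintype ι] [DecidableEq ι] {i j : ι} {c : ℂ}
    (hc : g i - g j = C c) :
    expPolySum Finset.univ (Pi.single i 1 - Pi.single j (C (exp c))) g = 0 := by
  have hgi : g i = g j + C c := by rw [← hc]; ring
  funext z
  simp only [expPolySum, Pi.sub_apply, Pi.single_apply, eval_sub, apply_ite (eval z), eval_one,
    eval_zero, eval_C, sub_mul, ite_mul, one_mul, zero_mul, Finset.sum_sub_distrib,
    Finset.sum_ite_eq', Finset.mem_univ, if_true, hgi, eval_add, exp_add, Pi.zero_apply]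
  ring

end expPolySum

/-- Let `g 1, …, g n ∈ ℂ[z]`. The differences `g i - g j` (for `i < j`) are all
nonconstant if and only if the entire functions `e^{g 1}, …, e^{g n}` are
linearly independent over `ℂ(z)`: for all polynomials `A 1, …, A n`, not all
zero, the function `z ↦ ∑ i, A i (z) * exp (g i (z))` is not identically
zero. -/
theorem exp_poly_linear_independent (n : ℕ) (g : Fin n → Polynomial ℂ) :
    (∀ i j : Fin n, i < j → ∀ c : ℂ, g i - g j ≠ Polynomial.C c) ↔
      (∀ A : Fin n → Polynomial ℂ, (∃ i, A i ≠ 0) →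
        ∃ z : ℂ, ∑ i, (A i).eval z * Complex.exp ((g i).eval z) ≠ 0) := by
  constructor
  · rintro hnc A ⟨i, hi⟩
    by_contra! hz
    refine hi (eq_zero_of_expPolySum_eq_zero Finset.univ A g ?_ (funext hz) i (Finset.mem_univ i))
    intro i _ j _ hij hd
    have hC {k l : Fin n} (h : derivative (g k) = derivative (g l)) :
        g k - g l = C ((g k - g l).coeff 0) :=
      eq_C_of_derivative_eq_zero (by rw [derivative_sub, h, sub_self])
    rcases hij.lt_or_gt with h | h
    exacts [hnc i j h _ (hC hd), hnc j i h _ (hC hd.symm)]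
  · intro hli i j hij c hc
    obtain ⟨z, hz⟩ := hli (Pi.single i 1 - Pi.single j (C (exp c))) ⟨i, by simp [hij.ne]⟩
    exact hz (congrFun (expPolySum_single_sub_single g hc) z)
end

section
/- For every integer m ≥ 1, the entire functions z, e^z, e^{z²}, …, e^{z^m} are algebraically independent over ℂ: for every nonzero polynomial P ∈ ℂ[X_0, X_1, …, X_m] in m+1 variables with complex coefficients, the function z ↦ P(z, exp(z), exp(z²), …, exp(z^m)) is not identically zero on ℂ. -/
/-!
Writing `P(z, e^z, …, e^{z^m}) = ∑_e Q_e(z) e^{ψ_e(z)}` with `Q_e ∈ ℂ[z]` and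
`ψ_e = e₁ z + ⋯ + e_m z^m`, distinct `e` give exponents `ψ_e` with distinct derivatives, so it
suffices that such a sum vanishes identically only if every `Q_e` does. Divide by `e^{ψ_j}` and
differentiate `deg Q_j + 1` times: the `j`-th term dies, while `(Q e^ψ)' = (Q' + ψ'Q) e^ψ` and
`Q' + ψ'Q ≠ 0` for `Q ≠ 0`, `ψ' ≠ 0` (compare degrees), so induction on the number of terms
applies.
-/

open Polynomial

namespace MvPolynomial

variable (R : Type*) [CommSemiring R] (n : ℕ)

noncomputable def finSuccEquivRight :
    MvPolynomial (Fin (n + 1)) R ≃ₐ[R] MvPolynomial (Fin n) R[X] :=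
  (renameEquiv R (_root_.finSuccEquiv n)).trans (optionEquivRight R (Fin n))

variable {R n}

theorem eval_cons_eq_eval₂_finSuccEquivRight (z : R) (y : Fin n → R)
    (P : MvPolynomial (Fin (n + 1)) R) :
    eval (Fin.cons z y) P = eval₂ (Polynomial.evalRingHom z) y (finSuccEquivRight R n P) := by
  suffices eval (Fin.cons z y) =
      (eval₂Hom (Polynomial.evalRingHom z) y).comp (finSuccEquivRight R n).toRingHom from
    RingHom.congr_fun this P
  refine ringHom_ext (fun r => ?_) (fun i => ?_)
  · simp [finSuccEquivRight]
  · cases i using Fin.cases with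
    | zero => simp [finSuccEquivRight]
    | succ i => simp [finSuccEquivRight]

end MvPolynomial

noncomputable def twistedDerivative (ψ Q : ℂ[X]) : ℂ[X] := derivative Q + derivative ψ * Q

@[simp]
theorem twistedDerivative_zero_left : twistedDerivative 0 = derivative :=
  funext fun Q => by simp [twistedDerivative]

theorem hasDerivAt_eval_mul_exp_eval (Q ψ : ℂ[X]) (z : ℂ) :
    HasDerivAt (fun w => Q.eval w * Complex.exp (ψ.eval w))
      ((twistedDerivative ψ Q).eval z * Complex.exp (ψ.eval z)) z := by
  refine ((Q.hasDerivAt z).fun_mul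
    ((Complex.hasDerivAt_exp _).comp z (ψ.hasDerivAt z))).congr_deriv ?_
  simp only [twistedDerivative, eval_add, eval_mul, Function.comp_apply]
  ring

theorem twistedDerivative_ne_zero {ψ Q : ℂ[X]} (hψ : derivative ψ ≠ 0) (hQ : Q ≠ 0) :
    twistedDerivative ψ Q ≠ 0 := by
  have hlt : (derivative Q).degree < (derivative ψ * Q).degree :=
    (degree_derivative_lt hQ).trans_le (by simpa [mul_comm] using degree_le_mul_left Q hψ)
  rw [twistedDerivative, ← degree_ne_bot, degree_add_eq_right_of_degree_lt hlt, degree_ne_bot]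
  exact mul_ne_zero hψ hQ

theorem iterate_twistedDerivative_ne_zero {ψ Q : ℂ[X]} (hψ : derivative ψ ≠ 0) (hQ : Q ≠ 0)
    (n : ℕ) : (twistedDerivative ψ)^[n] Q ≠ 0 := by
  induction n with
  | zero => exact hQ
  | succ n ih => exact Function.iterate_succ_apply' .. ▸ twistedDerivative_ne_zero hψ ih

section ExpPolynomialSums

variable {ι : Type*} (S : Finset ι) (Q ψ : ι → ℂ[X])

theorem sum_twistedDerivative_eq_zero
    (h : ∀ z, ∑ i ∈ S, (Q i).eval z * Complex.exp ((ψ i).eval z) = 0) (z : ℂ) :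
    ∑ i ∈ S, (twistedDerivative (ψ i) (Q i)).eval z * Complex.exp ((ψ i).eval z) = 0 := by
  have hderiv :=
    HasDerivAt.fun_sum (u := S) fun i _ => hasDerivAt_eval_mul_exp_eval (Q i) (ψ i) z
  rw [show (fun w => ∑ i ∈ S, (Q i).eval w * Complex.exp ((ψ i).eval w)) = fun _ => 0 from
    funext h] at hderiv
  exact hderiv.unique (hasDerivAt_const z 0)

theorem sum_iterate_twistedDerivative_eq_zero
    (h : ∀ z, ∑ i ∈ S, (Q i).eval z * Complex.exp ((ψ i).eval z) = 0) (n : ℕ) (z : ℂ) :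
    ∑ i ∈ S, ((twistedDerivative (ψ i))^[n] (Q i)).eval z * Complex.exp ((ψ i).eval z) =
      0 := by
  induction n generalizing z with
  | zero => exact h z
  | succ n ih =>
    simp only [Function.iterate_succ_apply']
    exact sum_twistedDerivative_eq_zero S _ ψ ih z

theorem sum_mul_exp_sub_eq_zero_iff (φ : ℂ[X]) (z : ℂ) :
    ∑ i ∈ S, (Q i).eval z * Complex.exp ((ψ i - φ).eval z) = 0 ↔
      ∑ i ∈ S, (Q i).eval z * Complex.exp ((ψ i).eval z) = 0 := by
  simp only [eval_sub, Complex.exp_sub, mul_div_assoc', ← Finset.sum_div, div_eq_zero_iff,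
    Complex.exp_ne_zero, or_false]

open Finset in
theorem eq_zero_of_sum_eval_mul_exp_eval_eq_zero
    (hψ : Set.InjOn (fun i => derivative (ψ i)) S)
    (h : ∀ z, ∑ i ∈ S, (Q i).eval z * Complex.exp ((ψ i).eval z) = 0) :
    ∀ i ∈ S, Q i = 0 := by
  classical
  induction S using Finset.induction_on generalizing Q with
  | empty => simp
  | insert j T hj ih =>
    have hT : ∀ i ∈ T, Q i = 0 := by
      set N := (Q j).natDegree + 1
      have hj0 : (twistedDerivative (ψ j - ψ j))^[N] (Q j) = 0 := by
        rw [sub_self, twistedDerivative_zero_left]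
        exact iterate_derivative_eq_zero (Q j).natDegree.lt_succ_self
      have hsum := sum_iterate_twistedDerivative_eq_zero _ Q (fun i => ψ i - ψ j)
        (fun z => (sum_mul_exp_sub_eq_zero_iff _ Q ψ (ψ j) z).2 (h z)) N
      have hTsum := ih (fun i => (twistedDerivative (ψ i - ψ j))^[N] (Q i)) (hψ.mono (by simp))
        fun z => (sum_mul_exp_sub_eq_zero_iff T _ ψ (ψ j) z).1 (by
          have hz := hsum z
          rwa [sum_insert hj, hj0, eval_zero, zero_mul, zero_add] at hz)
      intro i hi
      by_contra hQi
      refine iterate_twistedDerivative_ne_zero ?_ hQi N (hTsum i hi)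
      rw [derivative_sub, sub_ne_zero]
      exact hψ.ne (by simp [hi]) (by simp) (ne_of_mem_of_not_mem hi hj)
    have hQj : Q j = 0 := Polynomial.funext fun z => by
      have hz := h z
      rw [sum_insert hj, sum_eq_zero fun i hi => by rw [hT i hi, eval_zero, zero_mul],
        add_zero] at hz
      simpa using hz
    intro i hi
    rcases mem_insert.1 hi with rfl | hi
    exacts [hQj, hT i hi]

end ExpPolynomialSums

noncomputable def expMonomialExponent {m : ℕ} (e : Fin m →₀ ℕ) : ℂ[X] :=
  ∑ i : Fin m, monomial ((i : ℕ) + 1) (e i : ℂ)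

theorem coeff_expMonomialExponent_succ {m : ℕ} (e : Fin m →₀ ℕ) (i : Fin m) :
    (expMonomialExponent e).coeff (i + 1) = e i := by
  simp [expMonomialExponent, finsetSum_coeff, coeff_monomial, Fin.val_inj]

theorem derivative_expMonomialExponent_injective {m : ℕ} :
    Function.Injective fun e : Fin m →₀ ℕ => derivative (expMonomialExponent e) := by
  intro e e' h
  ext i
  simpa [coeff_derivative, coeff_expMonomialExponent_succ, Nat.cast_add_one_ne_zero]
    using congr_arg (coeff · i) h

theorem exp_eval_expMonomialExponent {m : ℕ} (e : Fin m →₀ ℕ) (z : ℂ) :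
    Complex.exp ((expMonomialExponent e).eval z) =
      ∏ i : Fin m, Complex.exp (z ^ ((i : ℕ) + 1)) ^ e i := by
  simp [expMonomialExponent, eval_finsetSum, Complex.exp_sum, Complex.exp_nat_mul]

theorem eval₂_exp_pow_succ_eq_sum {m : ℕ} (P : MvPolynomial (Fin m) ℂ[X]) (z : ℂ) :
    MvPolynomial.eval₂ (evalRingHom z) (fun i : Fin m => Complex.exp (z ^ ((i : ℕ) + 1))) P =
      ∑ e ∈ P.support, (P.coeff e).eval z * Complex.exp ((expMonomialExponent e).eval z) := by
  simp only [MvPolynomial.eval₂_eq', coe_evalRingHom, exp_eval_expMonomialExponent]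

theorem z_exp_powers_algebraically_independent_general (m : ℕ)
    (P : MvPolynomial (Fin (m + 1)) ℂ) (hP : P ≠ 0) :
    ∃ z : ℂ, MvPolynomial.eval
      (fun i : Fin (m + 1) => if (i : ℕ) = 0 then z else Complex.exp (z ^ (i : ℕ)))
      P ≠ 0 := by
  by_contra! hvanish
  set P' := MvPolynomial.finSuccEquivRight ℂ m P
  have hP' : P' ≠ 0 := (map_ne_zero_iff _ (MvPolynomial.finSuccEquivRight ℂ m).injective).2 hP
  obtain ⟨e, he⟩ := MvPolynomial.ne_zero_iff.1 hP'
  refine he (eq_zero_of_sum_eval_mul_exp_eval_eq_zero P'.support (P'.coeff ·) expMonomialExponent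
    derivative_expMonomialExponent_injective.injOn (fun z => ?_) e
    (MvPolynomial.mem_support_iff.2 he))
  have hpoint : (fun i : Fin (m + 1) => if (i : ℕ) = 0 then z else Complex.exp (z ^ (i : ℕ))) =
      Fin.cons z fun i : Fin m => Complex.exp (z ^ ((i : ℕ) + 1)) := by
    funext i
    cases i using Fin.cases <;> simp
  rw [← eval₂_exp_pow_succ_eq_sum, ← MvPolynomial.eval_cons_eq_eval₂_finSuccEquivRight,
    ← hpoint]
  exact hvanish z

/-- The entire functions `z, e^z, e^{z²}, …, e^{z^m}` are algebraically
independent over `ℂ`: for every nonzero polynomial `P` in `m + 1` complex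
variables, the function `z ↦ P(z, exp z, exp (z²), …, exp (z^m))` is not
identically zero. -/
theorem z_exp_powers_algebraically_independent (m : ℕ) (hm : 1 ≤ m)
    (P : MvPolynomial (Fin (m + 1)) ℂ) (hP : P ≠ 0) :
    ∃ z : ℂ, MvPolynomial.eval
      (fun i : Fin (m + 1) => if (i : ℕ) = 0 then z else Complex.exp (z ^ (i : ℕ)))
      P ≠ 0 :=
  z_exp_powers_algebraically_independent_general m P hP
end
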